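/- Let K ≥ 2 and let Θ_{R0}⁽¹⁾,…,Θ_{R0}⁽ᴷ⁾ be symmetric positive definite p×p real matrices with 1/L ≤ Λ_min(Θ_{R0}⁽ᵏ⁾) ≤ Λ_max(Θ_{R0}⁽ᵏ⁾) ≤ L for some L ≥ 1, set c = 1/(8L²), R₀⁽ᵏ⁾ = (Θ_{R0}⁽ᵏ⁾)⁻¹, and let s_k be the number of pairs (i,j) with i ≠ j and (Θ_{R0}⁽ᵏ⁾)_{ij} ≠ 0. Let R̂⁽¹⁾,…,R̂⁽ᴷ⁾ be symmetric p×p matrices such that R̂⁽ᵏ⁾ and R₀⁽ᵏ⁾ all have unit diagonal, and max_k ‖R̂⁽ᵏ⁾ − R₀⁽ᵏ⁾‖_∞ ≤ λ₀ for some λ₀ > 0. Suppose 2(K(K−1)ρ/2 + λ₀) ≤ λ ≤ c/(8L) with ρ ≥ 0, and 8λ² Σ_k s_k / c + 2Kpλ₀²/c ≤ λ₀/(2L). If (Θ̂_R⁽¹⁾,…,Θ̂_R⁽ᴷ⁾) minimizes F(Θ₁,…,Θ_K) = Σ_{k=1}^K [tr(R̂⁽ᵏ⁾Θ_k) − log det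 Θ_k] + λ Σ_{k=1}^K ‖Θ_k⁻‖₁ + ρ Σ_{k<k'} ‖Θ_k⁻ − Θ_{k'}⁻‖₁ over K-tuples of symmetric positive definite matrices, then c Σ_{k=1}^K ‖Θ̂_R⁽ᵏ⁾ − Θ_{R0}⁽ᵏ⁾‖_F² + λ Σ_{k=1}^K ‖(Θ̂_R⁽ᵏ⁾ − Θ_{R0}⁽ᵏ⁾)⁻‖₁ ≤ 8λ² Σ_{k=1}^K s_k / c. -/

import Mathlib

open Matrix
open scoped BigOperators Classical

noncomputable section

def frobSq {p : ℕ} (A : Matrix (Fin p) (Fin p) ℝ) : ℝ := ∑ i, ∑ j, (A i j) ^ 2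

def frobNorm {p : ℕ} (A : Matrix (Fin p) (Fin p) ℝ) : ℝ := Real.sqrt (frobSq A)

def l1Norm {p : ℕ} (A : Matrix (Fin p) (Fin p) ℝ) : ℝ := ∑ i, ∑ j, |A i j|

def supNorm {p : ℕ} (A : Matrix (Fin p) (Fin p) ℝ) : ℝ := ⨆ i, ⨆ j, |A i j|

def opNorm1 {p : ℕ} (A : Matrix (Fin p) (Fin p) ℝ) : ℝ := ⨆ j, ∑ i, |A i j|

/-- `A⁺` in the paper. -/
def diagPart {p : ℕ} (A : Matrix (Fin p) (Fin p) ℝ) : Matrix (Fin p) (Fin p) ℝ :=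
  Matrix.diagonal (fun i => A i i)

/-- `A⁻` in the paper. -/
def offDiagPart {p : ℕ} (A : Matrix (Fin p) (Fin p) ℝ) : Matrix (Fin p) (Fin p) ℝ :=
  A - diagPart A

def sparsity {p : ℕ} (A : Matrix (Fin p) (Fin p) ℝ) : ℕ :=
  (Finset.univ.filter (fun ij : Fin p × Fin p => ij.1 ≠ ij.2 ∧ A ij.1 ij.2 ≠ 0)).card

def objFGL {p K : ℕ} (S : Fin K → Matrix (Fin p) (Fin p) ℝ) (lam rho : ℝ)
    (Θ : Fin K → Matrix (Fin p) (Fin p) ℝ) : ℝ :=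
  ∑ k, (Matrix.trace (S k * Θ k) - Real.log (Θ k).det)
    + lam * ∑ k, l1Norm (offDiagPart (Θ k))
    + rho * ∑ k, ∑ k', if k < k' then l1Norm (offDiagPart (Θ k) - offDiagPart (Θ k')) else 0

/-!
Write `Δₖ = Θ̂ₖ - Θ₀ₖ`. By convexity of the objective, every point `Θ₀ + tΔ`, `t ∈ [0, 1]`, of
the segment towards the minimiser does no worse than `Θ₀`. Diagonalising `Δₖ` relative to `Θ₀ₖ`
(the eigenvalues `μ` of `Θ₀ₖ⁻¹Δₖ`) turns `-log det` into `-∑ log (1 + tμᵢ)`, whose curvature is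
at least `1/8 ∑ μᵢ²` as long as `|tμᵢ| ≤ 1/4`, and `∑ μᵢ² ≥ ‖Δₖ‖_F² / L²` by the eigenvalue
bounds. The linear term `t tr((R̂ - R₀)Δ)` only sees off-diagonal entries since the diagonals
agree; the fused penalty moves by at most `t (K - 1) ρ ∑ ‖Δₖ⁻‖₁`; the lasso penalty splits over
the support `S` of `Θ₀`. Together this gives the basic inequality
`c t ‖Δ‖_F² + λ/2 ‖Δ_{Sᶜ}‖₁ ≤ 3λ/2 ‖Δ_S‖₁` for every admissible `t`. The sparsity condition
forces `t = 1` to be admissible, and Cauchy–Schwarz `‖Δ_S‖₁ ≤ √s ‖Δ‖_F` turns the basic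
inequality into the oracle bound.
-/

namespace Real

lemma log_one_add_le_sub_sq_div_eight {x : ℝ} (hx : |x| ≤ 1 / 4) :
    log (1 + x) ≤ x - x ^ 2 / 8 := by
  have hx1 : |-x| < 1 := by rw [abs_neg]; linarith
  -- second-order Taylor bound for `log (1 - y)` at `y = -x`
  have htaylor := abs_log_sub_add_sum_range_le hx1 2
  simp only [Finset.sum_range_succ, Finset.sum_range_zero, abs_neg, sub_neg_eq_add] at htaylor
  have hrem : |x| ^ 3 / (1 - |x|) ≤ x ^ 2 / 3 := by
    rw [div_le_iff₀ (by linarith)]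
    nlinarith [abs_nonneg x, sq_abs x]
  have := (abs_le.mp htaylor).2
  norm_num at this
  nlinarith

lemma mul_log_one_add_le_log_one_add_mul {x t : ℝ} (hx : -1 < x) (ht0 : 0 ≤ t) (ht1 : t ≤ 1) :
    t * log (1 + x) ≤ log (1 + t * x) := by
  have h := strictConcaveOn_log_Ioi.concaveOn.2 (Set.mem_Ioi.mpr one_pos)
    (Set.mem_Ioi.mpr (by linarith : (0 : ℝ) < 1 + x)) (by linarith : (0 : ℝ) ≤ 1 - t) ht0
    (by ring)
  simp only [smul_eq_mul, log_one, mul_one, mul_zero, zero_add] at h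
  rwa [show 1 - t + t * (1 + x) = 1 + t * x by ring] at h

lemma log_mul_prod {ι : Type*} {s : Finset ι} {a : ℝ} {f : ι → ℝ} (ha : 0 < a)
    (hf : ∀ i ∈ s, 0 < f i) : log (a * ∏ i ∈ s, f i) = log a + ∑ i ∈ s, log (f i) := by
  rw [log_mul ha.ne' (Finset.prod_ne_zero_iff.mpr fun i hi => (hf i hi).ne'),
    log_prod fun i hi => (hf i hi).ne']

end Real

namespace Matrix

variable {n : Type*} [Fintype n] [DecidableEq n]

lemma IsHermitian.exists_unitary_eq_mul_diagonal_mul {A : Matrix n n ℝ} (hA : A.IsHermitian) :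
    ∃ U : Matrix n n ℝ, Uᴴ * U = 1 ∧ U * Uᴴ = 1 ∧ A = U * diagonal hA.eigenvalues * Uᴴ :=
  ⟨hA.eigenvectorUnitary, Unitary.coe_star_mul_self hA.eigenvectorUnitary,
    Unitary.coe_mul_star_self hA.eigenvectorUnitary,
    by simpa [star_eq_conjTranspose] using hA.spectral_theorem⟩

lemma inv_mul_diagonal_mul_conjTranspose {U : Matrix n n ℝ} (hU : Uᴴ * U = 1) {d : n → ℝ}
    (hd : ∀ i, d i ≠ 0) : (U * diagonal d * Uᴴ)⁻¹ = U * diagonal d⁻¹ * Uᴴ := by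
  refine inv_eq_left_inv ?_
  have hdd : (fun i => d⁻¹ i * d i) = 1 := funext fun i => inv_mul_cancel₀ (hd i)
  simp only [Matrix.mul_assoc]
  rw [← Matrix.mul_assoc Uᴴ, hU, Matrix.one_mul, ← Matrix.mul_assoc (diagonal _),
    diagonal_mul_diagonal, hdd, Pi.one_def, diagonal_one, Matrix.one_mul, mul_eq_one_comm.mp hU]

lemma PosDef.exists_isUnit_eq_mul_conjTranspose {A : Matrix n n ℝ} (hA : A.PosDef) :
    ∃ S : Matrix n n ℝ, IsUnit S ∧ A = S * Sᴴ := by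
  obtain ⟨U, -, -, hAeq⟩ := hA.1.exists_unitary_eq_mul_diagonal_mul
  set S := U * diagonal (fun i => √(hA.1.eigenvalues i))
  have hA_eq : A = S * Sᴴ := by
    have hsq : (fun i => √(hA.1.eigenvalues i) * √(hA.1.eigenvalues i)) = hA.1.eigenvalues :=
      funext fun i => Real.mul_self_sqrt (hA.eigenvalues_pos i).le
    rw [conjTranspose_mul, diagonal_conjTranspose, Matrix.mul_assoc,
      ← Matrix.mul_assoc (diagonal _), star_trivial, diagonal_mul_diagonal, hsq,
      ← Matrix.mul_assoc]
    exact hAeq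
  refine ⟨S, (isUnit_iff_isUnit_det S).mpr (isUnit_iff_ne_zero.mpr fun h => ?_), hA_eq⟩
  have := hA.det_pos
  rw [hA_eq, det_mul, h, zero_mul] at this
  exact lt_irrefl _ this

lemma PosDef.exists_simultaneous_diagonalization {A Δ : Matrix n n ℝ} (hA : A.PosDef)
    (hΔ : Δ.IsHermitian) :
    ∃ (Z : Matrix n n ℝ) (μ : n → ℝ), IsUnit Z ∧ A = Z * Zᴴ ∧ Δ = Z * diagonal μ * Zᴴ := by
  obtain ⟨S, hS, rfl⟩ := hA.exists_isUnit_eq_mul_conjTranspose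
  have hM : (S⁻¹ * Δ * S⁻¹ᴴ).IsHermitian := by
    simpa using isHermitian_conjTranspose_mul_mul S⁻¹ᴴ hΔ
  obtain ⟨V, -, hV, hMeq⟩ := hM.exists_unitary_eq_mul_diagonal_mul
  have hV_unit : IsUnit V := (isUnit_iff_isUnit_det V).mpr (isUnit_det_of_right_inverse hV)
  have hSS : S * S⁻¹ = 1 := mul_nonsing_inv S ((isUnit_iff_isUnit_det S).mp hS)
  refine ⟨S * V, hM.eigenvalues, hS.mul hV_unit, ?_, ?_⟩
  · rw [conjTranspose_mul, Matrix.mul_assoc, ← Matrix.mul_assoc V, hV, Matrix.one_mul]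
  · calc Δ = S * (S⁻¹ * Δ * S⁻¹ᴴ) * Sᴴ := by
          rw [Matrix.mul_assoc, Matrix.mul_assoc, ← conjTranspose_mul, hSS, conjTranspose_one,
            Matrix.mul_one, ← Matrix.mul_assoc, hSS, Matrix.one_mul]
      _ = _ := by
          conv_lhs => rw [hMeq]
          simp only [conjTranspose_mul, Matrix.mul_assoc]

lemma PosDef.exists_relative_eigenvalues {A Δ : Matrix n n ℝ} (hA : A.PosDef)
    (hΔ : Δ.IsHermitian) :
    ∃ μ : n → ℝ, (∀ t : ℝ, (A + t • Δ).det = A.det * ∏ i, (1 + t * μ i)) ∧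
      trace (A⁻¹ * Δ) = ∑ i, μ i ∧
      trace (A⁻¹ * Δ * (A⁻¹ * Δ)) = ∑ i, μ i ^ 2 ∧
      ((A + Δ).PosDef → ∀ i, 0 < 1 + μ i) := by
  obtain ⟨Z, μ, hZ, rfl, rfl⟩ := hA.exists_simultaneous_diagonalization hΔ
  have hZH : IsUnit Zᴴ := hZ.star
  have hadd (t : ℝ) :
      Z * Zᴴ + t • (Z * diagonal μ * Zᴴ) = Z * diagonal (fun i => 1 + t * μ i) * Zᴴ := by
    have hdiag : diagonal (fun i => 1 + t * μ i) = 1 + t • diagonal μ := by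
      rw [← diagonal_one, ← diagonal_smul, ← diagonal_add]
      rfl
    rw [hdiag, Matrix.mul_add, Matrix.add_mul, Matrix.mul_one, Matrix.mul_smul, Matrix.smul_mul]
  have hinv : (Z * Zᴴ)⁻¹ * (Z * diagonal μ * Zᴴ) = Zᴴ⁻¹ * diagonal μ * Zᴴ := by
    rw [mul_inv_rev, Matrix.mul_assoc, ← Matrix.mul_assoc Z⁻¹, ← Matrix.mul_assoc Z⁻¹,
      nonsing_inv_mul _ ((isUnit_iff_isUnit_det Z).mp hZ), Matrix.one_mul, Matrix.mul_assoc]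
  refine ⟨μ, fun t => ?_, ?_, ?_, fun hpos => ?_⟩
  · rw [hadd, det_mul, det_mul, det_mul Z, det_diagonal]
    ring
  · rw [hinv, trace_conj' hZH, trace_diagonal]
  · have hsq : (Zᴴ⁻¹ * diagonal μ * Zᴴ) * (Zᴴ⁻¹ * diagonal μ * Zᴴ)
        = Zᴴ⁻¹ * diagonal (fun i => μ i ^ 2) * Zᴴ := by
      simp only [Matrix.mul_assoc,
        mul_nonsing_inv_cancel_left _ _ ((isUnit_iff_isUnit_det _).mp hZH)]
      rw [← Matrix.mul_assoc (diagonal μ), diagonal_mul_diagonal]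
      simp only [sq]
    rw [hinv, hsq, trace_conj' hZH, trace_diagonal]
  · rw [← one_smul ℝ (Z * diagonal μ * Zᴴ), hadd 1, ← star_eq_conjTranspose,
      hZ.posDef_star_right_conjugate_iff, posDef_diagonal_iff] at hpos
    simpa using hpos

lemma PosDef.log_det_add_smul_le {A Δ : Matrix n n ℝ} (hA : A.PosDef) (hΔ : Δ.IsHermitian)
    {t : ℝ} (ht : t ^ 2 * trace (A⁻¹ * Δ * (A⁻¹ * Δ)) ≤ 1 / 16) :
    Real.log (A + t • Δ).det ≤ Real.log A.det + t * trace (A⁻¹ * Δ)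
      - t ^ 2 / 8 * trace (A⁻¹ * Δ * (A⁻¹ * Δ)) := by
  obtain ⟨μ, hdet, htr, hsq, -⟩ := hA.exists_relative_eigenvalues hΔ
  rw [hsq] at ht
  rw [htr, hsq]
  have hsmall (i : n) : |t * μ i| ≤ 1 / 4 := by
    have : μ i ^ 2 ≤ ∑ j, μ j ^ 2 :=
      Finset.single_le_sum (fun j _ => sq_nonneg (μ j)) (Finset.mem_univ i)
    rw [abs_le]; constructor <;> nlinarith [sq_nonneg t]
  rw [hdet, Real.log_mul_prod hA.det_pos fun i _ => by linarith [(abs_le.mp (hsmall i)).1],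
    Finset.mul_sum, Finset.mul_sum, add_sub_assoc, ← Finset.sum_sub_distrib]
  gcongr with i
  calc Real.log (1 + t * μ i) ≤ t * μ i - (t * μ i) ^ 2 / 8 :=
        Real.log_one_add_le_sub_sq_div_eight (hsmall i)
    _ = _ := by ring

lemma PosDef.log_det_add_smul_sub_ge {A B : Matrix n n ℝ} (hA : A.PosDef) (hB : B.PosDef)
    {t : ℝ} (ht0 : 0 ≤ t) (ht1 : t ≤ 1) :
    (1 - t) * Real.log A.det + t * Real.log B.det ≤ Real.log (A + t • (B - A)).det := by
  obtain ⟨μ, hdet, -, -, hpos⟩ := hA.exists_relative_eigenvalues (hB.1.sub hA.1)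
  have hpos : ∀ i, 0 < 1 + μ i := hpos (by simpa using hB)
  have hdetB : B.det = A.det * ∏ i, (1 + μ i) := by simpa using hdet 1
  rw [hdetB, hdet, Real.log_mul_prod hA.det_pos fun i _ => hpos i,
    Real.log_mul_prod hA.det_pos fun i _ => ?_]
  · have : t * ∑ i, Real.log (1 + μ i) ≤ ∑ i, Real.log (1 + t * μ i) := by
      rw [Finset.mul_sum]
      exact Finset.sum_le_sum fun i _ =>
        Real.mul_log_one_add_le_log_one_add_mul (by linarith [hpos i]) ht0 ht1
    linarith
  · rcases le_total 0 (μ i) with h | h <;> nlinarith [hpos i]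

end Matrix

section MatrixNorms

variable {p : ℕ}

lemma frobSq_nonneg (A : Matrix (Fin p) (Fin p) ℝ) : 0 ≤ frobSq A :=
  Finset.sum_nonneg fun _ _ => Finset.sum_nonneg fun _ _ => sq_nonneg _

lemma frobSq_eq_trace (X : Matrix (Fin p) (Fin p) ℝ) : frobSq X = trace (Xᴴ * X) := by
  simp only [frobSq, trace, diag, mul_apply, conjTranspose_apply, star_trivial, sq]
  exact Finset.sum_comm

lemma frobSq_conjTranspose_mul_mul {U : Matrix (Fin p) (Fin p) ℝ} (hU : U * Uᴴ = 1)
    (X : Matrix (Fin p) (Fin p) ℝ) : frobSq (Uᴴ * X * U) = frobSq X := by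
  rw [frobSq_eq_trace, frobSq_eq_trace]
  simp only [conjTranspose_mul, conjTranspose_conjTranspose, Matrix.mul_assoc]
  rw [← Matrix.mul_assoc U Uᴴ, hU, Matrix.one_mul, trace_mul_comm, Matrix.mul_assoc,
    Matrix.mul_assoc, hU, Matrix.mul_one]

lemma trace_diagonal_mul_mul_diagonal_mul_bounds {X : Matrix (Fin p) (Fin p) ℝ}
    (hX : X.IsHermitian) {g : Fin p → ℝ} {a b : ℝ} (ha : 0 ≤ a) (hg : ∀ i, a ≤ g i ∧ g i ≤ b) :
    a ^ 2 * frobSq X ≤ trace (diagonal g * X * (diagonal g * X))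
      ∧ trace (diagonal g * X * (diagonal g * X)) ≤ b ^ 2 * frobSq X := by
  have hsymm (i j : Fin p) : X j i = X i j :=
    (by simpa using congrFun (congrFun hX j) i : X i j = X j i).symm
  have htr : trace (diagonal g * X * (diagonal g * X)) = ∑ i, ∑ j, g i * g j * X i j ^ 2 := by
    simp only [trace, diag, mul_apply (M := diagonal g * X), diagonal_mul, hsymm]
    exact Finset.sum_congr rfl fun i _ => Finset.sum_congr rfl fun j _ => by ring
  rw [htr, frobSq, Finset.mul_sum]
  simp only [Finset.mul_sum]
  constructor <;> refine Finset.sum_le_sum fun i _ => Finset.sum_le_sum fun j _ => ?_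
  · have : a * a ≤ g i * g j := mul_le_mul (hg i).1 (hg j).1 ha (ha.trans (hg i).1)
    nlinarith [sq_nonneg (X i j)]
  · have : g i * g j ≤ b * b :=
      mul_le_mul (hg i).2 (hg j).2 (ha.trans (hg j).1) (ha.trans ((hg i).1.trans (hg i).2))
    nlinarith [sq_nonneg (X i j)]

lemma Matrix.PosDef.trace_inv_mul_sq_bounds {A Δ : Matrix (Fin p) (Fin p) ℝ}
    (hA : A.PosDef) {L : ℝ} (hL : 0 < L)
    (heig : ∀ i, 1 / L ≤ hA.1.eigenvalues i ∧ hA.1.eigenvalues i ≤ L) (hΔ : Δ.IsHermitian) :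
    frobSq Δ / L ^ 2 ≤ trace (A⁻¹ * Δ * (A⁻¹ * Δ))
      ∧ trace (A⁻¹ * Δ * (A⁻¹ * Δ)) ≤ L ^ 2 * frobSq Δ := by
  obtain ⟨U, hUU, hUU', hAeq⟩ := hA.1.exists_unitary_eq_mul_diagonal_mul
  have hinv : A⁻¹ = U * diagonal (hA.1.eigenvalues)⁻¹ * Uᴴ := by
    conv_lhs => rw [hAeq]
    exact inv_mul_diagonal_mul_conjTranspose hUU fun i => (hA.eigenvalues_pos i).ne'
  have htr : trace (A⁻¹ * Δ * (A⁻¹ * Δ)) = trace (diagonal (hA.1.eigenvalues)⁻¹ * (Uᴴ * Δ * U)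
      * (diagonal (hA.1.eigenvalues)⁻¹ * (Uᴴ * Δ * U))) := by
    rw [hinv]
    simp only [Matrix.mul_assoc]
    rw [trace_mul_comm U]
    simp only [Matrix.mul_assoc]
  have hg (i : Fin p) : 1 / L ≤ (hA.1.eigenvalues)⁻¹ i ∧ (hA.1.eigenvalues)⁻¹ i ≤ L := by
    have hpos := hA.eigenvalues_pos i
    obtain ⟨h1, h2⟩ := heig i
    constructor
    · rw [Pi.inv_apply, one_div]; exact inv_anti₀ hpos h2
    · rw [Pi.inv_apply]; exact inv_le_of_inv_le₀ (by positivity) (by simpa using h1)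
  obtain ⟨h1, h2⟩ := trace_diagonal_mul_mul_diagonal_mul_bounds
    (isHermitian_conjTranspose_mul_mul U hΔ) (by positivity) hg
  rw [frobSq_conjTranspose_mul_mul hUU'] at h1 h2
  rw [htr, div_eq_mul_inv, mul_comm, ← inv_pow, ← one_div]
  exact ⟨h1, h2⟩

lemma abs_le_supNorm (A : Matrix (Fin p) (Fin p) ℝ) (i j : Fin p) : |A i j| ≤ supNorm A :=
  (le_ciSup (Set.finite_range fun j => |A i j|).bddAbove j).trans
    (le_ciSup (Set.finite_range fun i => ⨆ j, |A i j|).bddAbove i)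

lemma l1Norm_nonneg (A : Matrix (Fin p) (Fin p) ℝ) : 0 ≤ l1Norm A :=
  Finset.sum_nonneg fun _ _ => Finset.sum_nonneg fun _ _ => abs_nonneg _

lemma l1Norm_add_le (A B : Matrix (Fin p) (Fin p) ℝ) : l1Norm (A + B) ≤ l1Norm A + l1Norm B := by
  simp only [l1Norm, Matrix.add_apply, ← Finset.sum_add_distrib]
  exact Finset.sum_le_sum fun i _ => Finset.sum_le_sum fun j _ => abs_add_le _ _

lemma l1Norm_smul (c : ℝ) (A : Matrix (Fin p) (Fin p) ℝ) : l1Norm (c • A) = |c| * l1Norm A := by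
  simp only [l1Norm, Matrix.smul_apply, smul_eq_mul, abs_mul, Finset.mul_sum]

lemma l1Norm_neg (A : Matrix (Fin p) (Fin p) ℝ) : l1Norm (-A) = l1Norm A := by
  simp only [l1Norm, Matrix.neg_apply, abs_neg]

lemma l1Norm_sub_le (A B : Matrix (Fin p) (Fin p) ℝ) : l1Norm (A - B) ≤ l1Norm A + l1Norm B := by
  simpa only [sub_eq_add_neg, l1Norm_neg] using l1Norm_add_le A (-B)

lemma l1Norm_add_smul_sub_le (A B : Matrix (Fin p) (Fin p) ℝ) {t : ℝ} (ht0 : 0 ≤ t)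
    (ht1 : t ≤ 1) : l1Norm (A + t • (B - A)) ≤ (1 - t) * l1Norm A + t * l1Norm B := by
  have h := l1Norm_add_le ((1 - t) • A) (t • B)
  rwa [l1Norm_smul, l1Norm_smul, abs_of_nonneg (by linarith), abs_of_nonneg ht0,
    show (1 - t) • A + t • B = A + t • (B - A) by module] at h

lemma l1Norm_sub_l1Norm_add_le (A B : Matrix (Fin p) (Fin p) ℝ) :
    l1Norm A - l1Norm (A + B) ≤ l1Norm B := by
  have h := l1Norm_add_le (A + B) (-B)
  rw [add_neg_cancel_right, l1Norm_neg] at h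
  linarith

lemma offDiagPart_apply (A : Matrix (Fin p) (Fin p) ℝ) (i j : Fin p) :
    offDiagPart A i j = if i = j then 0 else A i j := by
  by_cases h : i = j
  · subst h; simp [offDiagPart, diagPart]
  · simp [offDiagPart, diagPart, h]

lemma offDiagPart_add (A B : Matrix (Fin p) (Fin p) ℝ) :
    offDiagPart (A + B) = offDiagPart A + offDiagPart B := by
  ext i j; simp only [offDiagPart_apply, Matrix.add_apply]; split_ifs <;> simp

lemma offDiagPart_smul (c : ℝ) (A : Matrix (Fin p) (Fin p) ℝ) :
    offDiagPart (c • A) = c • offDiagPart A := by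
  ext i j; simp only [offDiagPart_apply, Matrix.smul_apply, smul_eq_mul]; split_ifs <;> simp

lemma offDiagPart_sub (A B : Matrix (Fin p) (Fin p) ℝ) :
    offDiagPart (A - B) = offDiagPart A - offDiagPart B := by
  ext i j; simp only [offDiagPart_apply, Matrix.sub_apply]; split_ifs <;> simp

def offDiagSupport (A : Matrix (Fin p) (Fin p) ℝ) : Finset (Fin p × Fin p) :=
  Finset.univ.filter fun ij => ij.1 ≠ ij.2 ∧ A ij.1 ij.2 ≠ 0

def offDiagZeros (A : Matrix (Fin p) (Fin p) ℝ) : Finset (Fin p × Fin p) :=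
  Finset.univ.filter fun ij => ij.1 ≠ ij.2 ∧ A ij.1 ij.2 = 0

def l1NormOn (s : Finset (Fin p × Fin p)) (A : Matrix (Fin p) (Fin p) ℝ) : ℝ :=
  ∑ ij ∈ s, |A ij.1 ij.2|

lemma l1NormOn_nonneg (s : Finset (Fin p × Fin p)) (A : Matrix (Fin p) (Fin p) ℝ) :
    0 ≤ l1NormOn s A :=
  Finset.sum_nonneg fun _ _ => abs_nonneg _

lemma l1Norm_offDiagPart_eq_l1NormOn_add (A Δ : Matrix (Fin p) (Fin p) ℝ) :
    l1Norm (offDiagPart Δ) = l1NormOn (offDiagSupport A) Δ + l1NormOn (offDiagZeros A) Δ := by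
  have hoff : l1Norm (offDiagPart Δ) = ∑ ij ∈ Finset.univ.filter (fun ij : Fin p × Fin p =>
      ij.1 ≠ ij.2), |Δ ij.1 ij.2| := by
    rw [Finset.sum_filter, ← Finset.univ_product_univ, Finset.sum_product, l1Norm]
    refine Finset.sum_congr rfl fun i _ => Finset.sum_congr rfl fun j _ => ?_
    rw [offDiagPart_apply]; split_ifs <;> simp_all
  rw [hoff, ← Finset.sum_filter_add_sum_filter_not _ fun ij => A ij.1 ij.2 ≠ 0,
    Finset.filter_filter, Finset.filter_filter]
  simp only [not_not]
  rfl

lemma l1Norm_offDiagPart_sub_l1Norm_add_smul_le (A Δ : Matrix (Fin p) (Fin p) ℝ) {t : ℝ}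
    (ht : 0 ≤ t) :
    l1Norm (offDiagPart A) - l1Norm (offDiagPart (A + t • Δ))
      ≤ t * (l1NormOn (offDiagSupport A) Δ - l1NormOn (offDiagZeros A) Δ) := by
  have hzero {ij} (hij : ij ∈ offDiagZeros A) : A ij.1 ij.2 = 0 :=
    (Finset.mem_filter.mp hij).2.2
  have hA : l1NormOn (offDiagZeros A) A = 0 :=
    Finset.sum_eq_zero fun ij hij => by rw [hzero hij, abs_zero]
  have hAt : l1NormOn (offDiagZeros A) (A + t • Δ) = t * l1NormOn (offDiagZeros A) Δ := by
    rw [l1NormOn, l1NormOn, Finset.mul_sum]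
    refine Finset.sum_congr rfl fun ij hij => ?_
    rw [Matrix.add_apply, hzero hij, Matrix.smul_apply, smul_eq_mul, zero_add, abs_mul,
      abs_of_nonneg ht]
  have hsupp : l1NormOn (offDiagSupport A) A - l1NormOn (offDiagSupport A) (A + t • Δ)
      ≤ t * l1NormOn (offDiagSupport A) Δ := by
    rw [l1NormOn, l1NormOn, l1NormOn, Finset.mul_sum, ← Finset.sum_sub_distrib]
    refine Finset.sum_le_sum fun ij _ => ?_
    calc |A ij.1 ij.2| - |(A + t • Δ) ij.1 ij.2| ≤ |A ij.1 ij.2 - (A + t • Δ) ij.1 ij.2| :=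
          abs_sub_abs_le_abs_sub _ _
      _ = t * |Δ ij.1 ij.2| := by
          rw [Matrix.add_apply, Matrix.smul_apply, smul_eq_mul, sub_add_cancel_left, abs_neg,
            abs_mul, abs_of_nonneg ht]
  rw [l1Norm_offDiagPart_eq_l1NormOn_add A A, l1Norm_offDiagPart_eq_l1NormOn_add A (A + t • Δ)]
  linarith

lemma abs_trace_mul_le_supNorm_mul_l1Norm {E : Matrix (Fin p) (Fin p) ℝ} (hE : ∀ i, E i i = 0)
    (Δ : Matrix (Fin p) (Fin p) ℝ) : |trace (E * Δ)| ≤ supNorm E * l1Norm (offDiagPart Δ) := by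
  have htr : trace (E * Δ) = ∑ i, ∑ j, E i j * offDiagPart Δ j i := by
    simp only [trace, diag, mul_apply]
    refine Finset.sum_congr rfl fun i _ => Finset.sum_congr rfl fun j _ => ?_
    rw [offDiagPart_apply]
    split_ifs with h
    · rw [h, hE, zero_mul, zero_mul]
    · rfl
  rw [htr, l1Norm, Finset.sum_comm, Finset.mul_sum]
  refine (Finset.abs_sum_le_sum_abs _ _).trans (Finset.sum_le_sum fun i _ => ?_)
  rw [Finset.mul_sum]
  refine (Finset.abs_sum_le_sum_abs _ _).trans (Finset.sum_le_sum fun j _ => ?_)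
  rw [abs_mul]
  exact mul_le_mul_of_nonneg_right (abs_le_supNorm E j i) (abs_nonneg _)

lemma l1NormOn_le_sqrt_card_mul_sqrt_frobSq (s : Finset (Fin p × Fin p))
    (A : Matrix (Fin p) (Fin p) ℝ) : l1NormOn s A ≤ √(s.card : ℝ) * √(frobSq A) := by
  rw [← Real.sqrt_mul (Nat.cast_nonneg _)]
  refine Real.le_sqrt_of_sq_le ((sq_sum_le_card_mul_sum_sq ..).trans ?_)
  gcongr
  simp only [sq_abs]
  rw [frobSq, ← Finset.sum_product', Finset.univ_product_univ]
  exact Finset.sum_le_sum_of_subset_of_nonneg (Finset.subset_univ s) fun _ _ _ => sq_nonneg _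

end MatrixNorms

lemma Finset.sum_sum_ite_lt_add {ι : Type*} [Fintype ι] [LinearOrder ι] (a : ι → ℝ) :
    ∑ k, ∑ k', (if k < k' then a k + a k' else 0) = ((Fintype.card ι : ℝ) - 1) * ∑ k, a k := by
  have hsplit (k k' : ι) : (if k < k' then a k + a k' else 0)
      = (if k < k' then a k else 0) + (if k < k' then a k' else 0) := by
    split_ifs <;> simp
  simp only [hsplit, Finset.sum_add_distrib]
  rw [Finset.sum_comm (f := fun k k' => if k < k' then a k' else 0), ← Finset.sum_add_distrib,
    Finset.mul_sum]
  refine Finset.sum_congr rfl fun k _ => ?_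
  have hne (k' : ι) : ((if k < k' then a k else 0) + if k' < k then a k else 0)
      = if k' ≠ k then a k else 0 := by
    rcases lt_trichotomy k k' with h | rfl | h
    · simp [h, h.ne', not_lt_of_gt h]
    · simp
    · simp [h, h.ne, not_lt_of_gt h]
  rw [← Finset.sum_add_distrib, Finset.sum_congr rfl fun k' _ => hne k', ← Finset.sum_filter,
    Finset.sum_const, Finset.filter_ne', Finset.card_erase_of_mem (Finset.mem_univ k),
    Finset.card_univ, nsmul_eq_mul, Nat.cast_sub (Fintype.card_pos_iff.mpr ⟨k⟩), Nat.cast_one]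

section FusedGraphicalLasso

variable {p K : ℕ}

def fusedPenalty (Θ : Fin K → Matrix (Fin p) (Fin p) ℝ) : ℝ :=
  ∑ k, ∑ k', if k < k' then l1Norm (offDiagPart (Θ k) - offDiagPart (Θ k')) else 0

lemma objFGL_eq (S : Fin K → Matrix (Fin p) (Fin p) ℝ) (lam rho : ℝ)
    (Θ : Fin K → Matrix (Fin p) (Fin p) ℝ) :
    objFGL S lam rho Θ = ∑ k, (trace (S k * Θ k) - Real.log (Θ k).det)
      + lam * ∑ k, l1Norm (offDiagPart (Θ k)) + rho * fusedPenalty Θ :=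
  rfl

lemma offDiagPart_add_smul_sub_offDiagPart_add_smul (A B Δ Δ' : Matrix (Fin p) (Fin p) ℝ)
    (t : ℝ) : offDiagPart (A + t • Δ) - offDiagPart (B + t • Δ')
      = (offDiagPart A - offDiagPart B) + t • (offDiagPart Δ - offDiagPart Δ') := by
  simp only [offDiagPart_add, offDiagPart_smul]
  module

lemma fusedPenalty_add_smul_sub_le (Θ₀ Θ₁ : Fin K → Matrix (Fin p) (Fin p) ℝ) {t : ℝ}
    (ht0 : 0 ≤ t) (ht1 : t ≤ 1) :
    fusedPenalty (fun k => Θ₀ k + t • (Θ₁ k - Θ₀ k))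
      ≤ (1 - t) * fusedPenalty Θ₀ + t * fusedPenalty Θ₁ := by
  simp only [fusedPenalty, Finset.mul_sum, ← Finset.sum_add_distrib]
  refine Finset.sum_le_sum fun k _ => Finset.sum_le_sum fun k' _ => ?_
  split_ifs
  · rw [offDiagPart_add_smul_sub_offDiagPart_add_smul, offDiagPart_sub, offDiagPart_sub,
      show offDiagPart (Θ₁ k) - offDiagPart (Θ₀ k) - (offDiagPart (Θ₁ k') - offDiagPart (Θ₀ k'))
        = (offDiagPart (Θ₁ k) - offDiagPart (Θ₁ k')) - (offDiagPart (Θ₀ k) - offDiagPart (Θ₀ k'))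
        by abel]
    exact l1Norm_add_smul_sub_le _ _ ht0 ht1
  · simp

lemma fusedPenalty_sub_add_smul_le (Θ Δ : Fin K → Matrix (Fin p) (Fin p) ℝ) {t : ℝ}
    (ht : 0 ≤ t) :
    fusedPenalty Θ - fusedPenalty (fun k => Θ k + t • Δ k)
      ≤ t * (((K : ℝ) - 1) * ∑ k, l1Norm (offDiagPart (Δ k))) := by
  have hpair (k k' : Fin K) :
      l1Norm (offDiagPart (Θ k) - offDiagPart (Θ k'))
        - l1Norm (offDiagPart (Θ k + t • Δ k) - offDiagPart (Θ k' + t • Δ k'))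
      ≤ t * (l1Norm (offDiagPart (Δ k)) + l1Norm (offDiagPart (Δ k'))) := by
    rw [offDiagPart_add_smul_sub_offDiagPart_add_smul]
    refine (l1Norm_sub_l1Norm_add_le _ _).trans ?_
    rw [l1Norm_smul, abs_of_nonneg ht]
    exact mul_le_mul_of_nonneg_left (l1Norm_sub_le _ _) ht
  have hcount : ((K : ℝ) - 1) * ∑ k, l1Norm (offDiagPart (Δ k))
      = ∑ k, ∑ k', if k < k' then l1Norm (offDiagPart (Δ k)) + l1Norm (offDiagPart (Δ k'))
        else 0 := by
    rw [Finset.sum_sum_ite_lt_add, Fintype.card_fin]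
  rw [hcount, Finset.mul_sum, fusedPenalty, fusedPenalty, ← Finset.sum_sub_distrib]
  refine Finset.sum_le_sum fun k _ => ?_
  rw [Finset.mul_sum, ← Finset.sum_sub_distrib]
  refine Finset.sum_le_sum fun k' _ => ?_
  split_ifs
  · exact hpair k k'
  · simp

lemma objFGL_add_smul_sub_le (S : Fin K → Matrix (Fin p) (Fin p) ℝ) {lam rho : ℝ}
    (hlam : 0 ≤ lam) (hrho : 0 ≤ rho) {Θ₀ Θ₁ : Fin K → Matrix (Fin p) (Fin p) ℝ}
    (h₀ : ∀ k, (Θ₀ k).PosDef) (h₁ : ∀ k, (Θ₁ k).PosDef) {t : ℝ} (ht0 : 0 ≤ t) (ht1 : t ≤ 1) :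
    objFGL S lam rho (fun k => Θ₀ k + t • (Θ₁ k - Θ₀ k))
      ≤ (1 - t) * objFGL S lam rho Θ₀ + t * objFGL S lam rho Θ₁ := by
  have hsmooth (k : Fin K) :
      trace (S k * (Θ₀ k + t • (Θ₁ k - Θ₀ k))) - Real.log (Θ₀ k + t • (Θ₁ k - Θ₀ k)).det
        ≤ (1 - t) * (trace (S k * Θ₀ k) - Real.log (Θ₀ k).det)
          + t * (trace (S k * Θ₁ k) - Real.log (Θ₁ k).det) := by
    have hlog := (h₀ k).log_det_add_smul_sub_ge (h₁ k) ht0 ht1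
    rw [Matrix.mul_add, Matrix.mul_smul, Matrix.mul_sub, trace_add, trace_smul, trace_sub,
      smul_eq_mul]
    linarith
  have hlasso (k : Fin K) : l1Norm (offDiagPart (Θ₀ k + t • (Θ₁ k - Θ₀ k)))
      ≤ (1 - t) * l1Norm (offDiagPart (Θ₀ k)) + t * l1Norm (offDiagPart (Θ₁ k)) := by
    rw [offDiagPart_add, offDiagPart_smul, offDiagPart_sub]
    exact l1Norm_add_smul_sub_le _ _ ht0 ht1
  have h1 := Finset.sum_le_sum fun k (_ : k ∈ Finset.univ) => hsmooth k
  have h2 := Finset.sum_le_sum fun k (_ : k ∈ Finset.univ) => hlasso k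
  have h3 := fusedPenalty_add_smul_sub_le Θ₀ Θ₁ ht0 ht1
  simp only [Finset.sum_add_distrib, ← Finset.mul_sum] at h1 h2
  rw [objFGL_eq, objFGL_eq, objFGL_eq]
  linear_combination h1 + lam * h2 + rho * h3

lemma objFGL_sub_objFGL_add_smul_le (S : Fin K → Matrix (Fin p) (Fin p) ℝ) {lam rho : ℝ}
    (hlam : 0 ≤ lam) (hrho : 0 ≤ rho) {Θ Δ : Fin K → Matrix (Fin p) (Fin p) ℝ}
    (hΘ : ∀ k, (Θ k).PosDef) (hΔ : ∀ k, (Δ k).IsHermitian) {t : ℝ} (ht : 0 ≤ t)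
    (hsmall : ∀ k, t ^ 2 * trace ((Θ k)⁻¹ * Δ k * ((Θ k)⁻¹ * Δ k)) ≤ 1 / 16) :
    objFGL S lam rho Θ - objFGL S lam rho (fun k => Θ k + t • Δ k)
      ≤ ∑ k, (-(t * trace ((S k - (Θ k)⁻¹) * Δ k))
          - t ^ 2 / 8 * trace ((Θ k)⁻¹ * Δ k * ((Θ k)⁻¹ * Δ k)))
        + lam * (t * ∑ k, (l1NormOn (offDiagSupport (Θ k)) (Δ k)
          - l1NormOn (offDiagZeros (Θ k)) (Δ k)))
        + rho * (t * (((K : ℝ) - 1) * ∑ k, l1Norm (offDiagPart (Δ k)))) := by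
  have hsmooth (k : Fin K) :
      (trace (S k * Θ k) - Real.log (Θ k).det)
        - (trace (S k * (Θ k + t • Δ k)) - Real.log (Θ k + t • Δ k).det)
      ≤ -(t * trace ((S k - (Θ k)⁻¹) * Δ k))
          - t ^ 2 / 8 * trace ((Θ k)⁻¹ * Δ k * ((Θ k)⁻¹ * Δ k)) := by
    have hlog := (hΘ k).log_det_add_smul_le (hΔ k) (hsmall k)
    rw [Matrix.mul_add, Matrix.mul_smul, trace_add, trace_smul, smul_eq_mul, Matrix.sub_mul,
      trace_sub]
    linarith
  have h1 := Finset.sum_le_sum fun k (_ : k ∈ Finset.univ) => hsmooth k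
  have h2 := Finset.sum_le_sum fun k (_ : k ∈ Finset.univ) =>
    l1Norm_offDiagPart_sub_l1Norm_add_smul_le (Θ k) (Δ k) ht
  have h3 := fusedPenalty_sub_add_smul_le Θ Δ ht
  rw [Finset.sum_sub_distrib] at h1 h2
  rw [← Finset.mul_sum] at h2
  rw [objFGL_eq, objFGL_eq]
  linear_combination h1 + lam * h2 + rho * h3

lemma sum_l1Norm_offDiagPart_eq_add (Θ Δ : Fin K → Matrix (Fin p) (Fin p) ℝ) :
    ∑ k, l1Norm (offDiagPart (Δ k)) = ∑ k, l1NormOn (offDiagSupport (Θ k)) (Δ k)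
      + ∑ k, l1NormOn (offDiagZeros (Θ k)) (Δ k) := by
  rw [← Finset.sum_add_distrib]
  exact Finset.sum_congr rfl fun k _ => l1Norm_offDiagPart_eq_l1NormOn_add (Θ k) (Δ k)

lemma sum_l1NormOn_offDiagSupport_le (Θ Δ : Fin K → Matrix (Fin p) (Fin p) ℝ) :
    ∑ k, l1NormOn (offDiagSupport (Θ k)) (Δ k)
      ≤ √(∑ k, (sparsity (Θ k) : ℝ)) * √(∑ k, frobSq (Δ k)) :=
  (Finset.sum_le_sum fun _ _ => l1NormOn_le_sqrt_card_mul_sqrt_frobSq _ _).trans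
    (Real.sum_sqrt_mul_sqrt_le _ (fun _ => Nat.cast_nonneg _) fun k => frobSq_nonneg (Δ k))

lemma objFGL_basic_inequality {L lam rho lam0 : ℝ} (hL : 0 < L)
    {Θ₀ R Θ₁ : Fin K → Matrix (Fin p) (Fin p) ℝ} (hΘ₀ : ∀ k, (Θ₀ k).PosDef)
    (heig : ∀ k i, 1 / L ≤ (hΘ₀ k).1.eigenvalues i ∧ (hΘ₀ k).1.eigenvalues i ≤ L)
    (hRdiag : ∀ k i, R k i i = 1) (hR0diag : ∀ k i, (Θ₀ k)⁻¹ i i = 1)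
    (hclose : ∀ k, supNorm (R k - (Θ₀ k)⁻¹) ≤ lam0) (hlam : 0 ≤ lam) (hrho : 0 ≤ rho)
    (hrhoK : rho * ((K : ℝ) - 1) ≤ lam / 2 - lam0)
    (hΘ₁ : ∀ k, (Θ₁ k).PosDef) (hmin : objFGL R lam rho Θ₁ ≤ objFGL R lam rho Θ₀)
    {t : ℝ} (ht0 : 0 < t) (ht1 : t ≤ 1)
    (hsmall : t ^ 2 * L ^ 2 * ∑ k, frobSq (Θ₁ k - Θ₀ k) ≤ 1 / 16) :
    1 / (8 * L ^ 2) * t * ∑ k, frobSq (Θ₁ k - Θ₀ k)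
        + lam / 2 * ∑ k, l1NormOn (offDiagZeros (Θ₀ k)) (Θ₁ k - Θ₀ k)
      ≤ 3 * lam / 2 * ∑ k, l1NormOn (offDiagSupport (Θ₀ k)) (Θ₁ k - Θ₀ k) := by
  set Δ : Fin K → Matrix (Fin p) (Fin p) ℝ := fun k => Θ₁ k - Θ₀ k
  set Q : Fin K → ℝ := fun k => trace ((Θ₀ k)⁻¹ * Δ k * ((Θ₀ k)⁻¹ * Δ k))
  set W := ∑ k, l1NormOn (offDiagSupport (Θ₀ k)) (Δ k)
  set U := ∑ k, l1NormOn (offDiagZeros (Θ₀ k)) (Δ k)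
  have hΔ (k : Fin K) : (Δ k).IsHermitian := (hΘ₁ k).1.sub (hΘ₀ k).1
  have hQ (k : Fin K) : frobSq (Δ k) / L ^ 2 ≤ Q k ∧ Q k ≤ L ^ 2 * frobSq (Δ k) :=
    (hΘ₀ k).trace_inv_mul_sq_bounds hL (heig k) (hΔ k)
  have hsmallk (k : Fin K) : t ^ 2 * Q k ≤ 1 / 16 := by
    have hFk : frobSq (Δ k) ≤ ∑ k, frobSq (Δ k) :=
      Finset.single_le_sum (fun k _ => frobSq_nonneg (Δ k)) (Finset.mem_univ k)
    have h1 := mul_le_mul_of_nonneg_left (hQ k).2 (sq_nonneg t)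
    have h2 := mul_le_mul_of_nonneg_left hFk (by positivity : 0 ≤ t ^ 2 * L ^ 2)
    linarith
  have hdecrease : objFGL R lam rho (fun k => Θ₀ k + t • Δ k) ≤ objFGL R lam rho Θ₀ := by
    have := objFGL_add_smul_sub_le R hlam hrho hΘ₀ hΘ₁ ht0.le ht1
    linarith [mul_le_mul_of_nonneg_left hmin ht0.le]
  have hincrement := objFGL_sub_objFGL_add_smul_le R hlam hrho hΘ₀ hΔ ht0.le hsmallk
  have hnoise (k : Fin K) :
      -trace ((R k - (Θ₀ k)⁻¹) * Δ k) ≤ lam0 * l1Norm (offDiagPart (Δ k)) := by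
    have h := abs_trace_mul_le_supNorm_mul_l1Norm
      (E := R k - (Θ₀ k)⁻¹) (fun i => by simp [hRdiag, hR0diag]) (Δ k)
    have := mul_le_mul_of_nonneg_right (hclose k) (l1Norm_nonneg (offDiagPart (Δ k)))
    linarith [neg_abs_le (trace ((R k - (Θ₀ k)⁻¹) * Δ k))]
  have hsplit : ∑ k, l1Norm (offDiagPart (Δ k)) = W + U := sum_l1Norm_offDiagPart_eq_add Θ₀ Δ
  have hQsum : (∑ k, frobSq (Δ k)) / L ^ 2 ≤ ∑ k, Q k := by
    rw [Finset.sum_div]; exact Finset.sum_le_sum fun k _ => (hQ k).1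
  have hnoise_sum : -∑ k, trace ((R k - (Θ₀ k)⁻¹) * Δ k) ≤ lam0 * (W + U) := by
    rw [← hsplit, Finset.mul_sum, ← Finset.sum_neg_distrib]
    exact Finset.sum_le_sum fun k _ => hnoise k
  have hfused : rho * ((K : ℝ) - 1) * (W + U) ≤ (lam / 2 - lam0) * (W + U) :=
    mul_le_mul_of_nonneg_right hrhoK (hsplit ▸ Finset.sum_nonneg fun k _ => l1Norm_nonneg _)
  rw [hsplit, Finset.sum_sub_distrib, Finset.sum_sub_distrib, Finset.sum_neg_distrib,
    ← Finset.mul_sum, ← Finset.mul_sum] at hincrement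
  refine le_of_mul_le_mul_left ?_ ht0
  linear_combination hdecrease + hincrement + mul_le_mul_of_nonneg_left hnoise_sum ht0.le
    + mul_le_mul_of_nonneg_left hQsum (by positivity : (0 : ℝ) ≤ t ^ 2 / 8)
    + mul_le_mul_of_nonneg_left hfused ht0.le

end FusedGraphicalLasso

lemma sixteen_mul_mul_sqrt_le {c L lam lam0 s : ℝ} (hc : 0 < c) (hL : 0 < L) (hlam0 : 0 < lam0)
    (hlam : 2 * lam0 ≤ lam) (hs : 0 ≤ s) (hlam_high : lam ≤ c / (8 * L))
    (hsparse : 8 * lam ^ 2 * s / c ≤ lam0 / (2 * L)) : 16 * L * lam * √s ≤ c := by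
  have hlam_pos : 0 < lam := by linarith
  rw [div_le_div_iff₀ hc (by positivity)] at hsparse
  rw [le_div_iff₀ (by positivity)] at hlam_high
  have h1 : 32 * L * lam * s ≤ c := by nlinarith
  have h2 : (16 * L * lam * √s) ^ 2 ≤ c ^ 2 := by
    rw [mul_pow, Real.sq_sqrt hs]
    nlinarith [mul_le_mul h1 hlam_high (by positivity) hc.le]
  exact (pow_le_pow_iff_left₀ (by positivity) hc.le two_ne_zero).mp h2

lemma oracle_of_basic_inequality {c L lam s F W U : ℝ} (hc : 0 < c) (hL : 0 < L) (hlam : 0 ≤ lam)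
    (hs : 0 ≤ s) (hF : 0 ≤ F) (hU : 0 ≤ U) (hW : W ≤ √s * √F) (hlams : 16 * L * lam * √s ≤ c)
    (hbasic : ∀ t : ℝ, 0 < t → t ≤ 1 → t ^ 2 * L ^ 2 * F ≤ 1 / 16 →
      c * t * F + lam / 2 * U ≤ 3 * lam / 2 * W) :
    c * F + lam * (W + U) ≤ 4 * lam ^ 2 * s / c := by
  obtain ⟨y, hy, rfl⟩ : ∃ y, 0 ≤ y ∧ F = y ^ 2 := ⟨√F, Real.sqrt_nonneg F, (Real.sq_sqrt hF).symm⟩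
  rw [Real.sqrt_sq hy] at hW
  have hlocal : L ^ 2 * y ^ 2 ≤ 1 / 16 := by
    by_contra! hlarge
    have hLy : 1 < 4 * L * y := by nlinarith [mul_nonneg hL.le hy]
    have hy0 : 0 < y := by nlinarith
    -- `t = 1 / (4 L y)` makes the constraint in `hbasic` an equality
    have h := hbasic (1 / (4 * L * y)) (by positivity)
      (by rw [div_le_one (by positivity)]; exact hLy.le) (by field_simp; norm_num)
    have hcy : c * y ≤ 6 * L * lam * √s * y := by
      rw [show c * (1 / (4 * L * y)) * y ^ 2 = c * y / (4 * L) by field_simp,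
        div_add' _ _ _ (by positivity), div_le_iff₀ (by positivity)] at h
      nlinarith [mul_le_mul_of_nonneg_left hW (by positivity : (0 : ℝ) ≤ 3 * lam / 2 * (4 * L)),
        mul_nonneg (mul_nonneg hlam hU) hL.le]
    have := le_of_mul_le_mul_right hcy hy0
    linarith
  have h1 := hbasic 1 one_pos le_rfl (by linarith)
  have h2 : c * y ^ 2 + lam * (W + U) ≤ 4 * lam * (√s * y) - c * y ^ 2 := by
    nlinarith [mul_le_mul_of_nonneg_left hW (by positivity : (0 : ℝ) ≤ 4 * lam)]
  have h3 : 4 * lam * (√s * y) - c * y ^ 2 ≤ 4 * lam ^ 2 * s / c := by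
    rw [le_div_iff₀ hc]
    nlinarith [sq_nonneg (c * y - 2 * lam * √s), Real.sq_sqrt hs]
  linarith

theorem oracle_inequality_FGL_multi_correlation_general
    (p K : ℕ) (hK : 2 ≤ K) (L lam rho lam0 : ℝ) (hL : 1 ≤ L)
    (ΘR0 Rhat ΘhatR : Fin K → Matrix (Fin p) (Fin p) ℝ)
    (hΘR0 : ∀ k, (ΘR0 k).PosDef)
    (heig : ∀ k i, 1 / L ≤ (hΘR0 k).1.eigenvalues i ∧ (hΘR0 k).1.eigenvalues i ≤ L)
    (hRdiag : ∀ k i, Rhat k i i = 1)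
    (hR0diag : ∀ k i, (ΘR0 k)⁻¹ i i = 1)
    (hlam0 : 0 < lam0)
    (hclose : ∀ k, supNorm (Rhat k - (ΘR0 k)⁻¹) ≤ lam0)
    (hrho : 0 ≤ rho)
    (hlam_low : 2 * ((K : ℝ) * ((K : ℝ) - 1) / 2 * rho + lam0) ≤ lam)
    (hlam_high : lam ≤ (1 / (8 * L ^ 2)) / (8 * L))
    (hsparse : 8 * lam ^ 2 * (∑ k, (sparsity (ΘR0 k) : ℝ)) / (1 / (8 * L ^ 2))
        + 2 * (K : ℝ) * (p : ℝ) * lam0 ^ 2 / (1 / (8 * L ^ 2)) ≤ lam0 / (2 * L))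
    (hΘhatR : ∀ k, (ΘhatR k).PosDef)
    (hmin : ∀ Θ : Fin K → Matrix (Fin p) (Fin p) ℝ, (∀ k, (Θ k).PosDef) →
        objFGL Rhat lam rho ΘhatR ≤ objFGL Rhat lam rho Θ) :
    (1 / (8 * L ^ 2)) * ∑ k, frobSq (ΘhatR k - ΘR0 k)
      + lam * ∑ k, l1Norm (offDiagPart (ΘhatR k - ΘR0 k))
      ≤ 8 * lam ^ 2 * (∑ k, (sparsity (ΘR0 k) : ℝ)) / (1 / (8 * L ^ 2)) := by
  have hL0 : 0 < L := by linarith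
  have hK2 : (2 : ℝ) ≤ K := by exact_mod_cast hK
  have hrhoK : rho * ((K : ℝ) - 1) ≤ lam / 2 - lam0 := by
    nlinarith [mul_nonneg (mul_nonneg hrho (by linarith : (0 : ℝ) ≤ K - 1)) (sub_nonneg.2 hK2)]
  have hlam : 2 * lam0 ≤ lam := by
    nlinarith [mul_nonneg hrho (by linarith : (0 : ℝ) ≤ K - 1)]
  have hs : (0 : ℝ) ≤ ∑ k, (sparsity (ΘR0 k) : ℝ) := Finset.sum_nonneg fun _ _ => Nat.cast_nonneg _
  rw [sum_l1Norm_offDiagPart_eq_add ΘR0]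
  refine (oracle_of_basic_inequality (by positivity) hL0 (by linarith) hs
    (Finset.sum_nonneg fun _ _ => frobSq_nonneg _)
    (Finset.sum_nonneg fun _ _ => l1NormOn_nonneg _ _) (sum_l1NormOn_offDiagSupport_le ΘR0 _)
    (sixteen_mul_mul_sqrt_le (by positivity) hL0 hlam0 hlam hs hlam_high
      (by linarith [show 0 ≤ 2 * (K : ℝ) * (p : ℝ) * lam0 ^ 2 / (1 / (8 * L ^ 2)) by positivity]))
    fun t ht0 ht1 hsmall => objFGL_basic_inequality hL0 hΘR0 heig hRdiag hR0diag hclose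
      (by linarith) hrho hrhoK hΘhatR (hmin ΘR0 hΘR0) ht0 ht1 hsmall).trans ?_
  gcongr
  norm_num

/-- Oracle inequality (Frobenius/ℓ₁ part) for the `K`-group fused graphical
lasso estimator based on correlation-type matrices with unit diagonals; here
`c = 1/(8L²)` and `R₀⁽ᵏ⁾ = (Θ_{R0}⁽ᵏ⁾)⁻¹`. -/
theorem oracle_inequality_FGL_multi_correlation
    (p K : ℕ) (hK : 2 ≤ K) (L lam rho lam0 : ℝ) (hL : 1 ≤ L)
    (ΘR0 Rhat ΘhatR : Fin K → Matrix (Fin p) (Fin p) ℝ)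
    (hΘR0 : ∀ k, (ΘR0 k).PosDef)
    (heig : ∀ k i, 1 / L ≤ (hΘR0 k).1.eigenvalues i ∧ (hΘR0 k).1.eigenvalues i ≤ L)
    (hRsymm : ∀ k, (Rhat k).IsSymm)
    (hRdiag : ∀ k i, Rhat k i i = 1)
    (hR0diag : ∀ k i, (ΘR0 k)⁻¹ i i = 1)
    (hlam0 : 0 < lam0)
    (hclose : ∀ k, supNorm (Rhat k - (ΘR0 k)⁻¹) ≤ lam0)
    (hrho : 0 ≤ rho)
    (hlam_low : 2 * ((K : ℝ) * ((K : ℝ) - 1) / 2 * rho + lam0) ≤ lam)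
    (hlam_high : lam ≤ (1 / (8 * L ^ 2)) / (8 * L))
    (hsparse : 8 * lam ^ 2 * (∑ k, (sparsity (ΘR0 k) : ℝ)) / (1 / (8 * L ^ 2))
        + 2 * (K : ℝ) * (p : ℝ) * lam0 ^ 2 / (1 / (8 * L ^ 2)) ≤ lam0 / (2 * L))
    (hΘhatR : ∀ k, (ΘhatR k).PosDef)
    (hmin : ∀ Θ : Fin K → Matrix (Fin p) (Fin p) ℝ, (∀ k, (Θ k).PosDef) →
        objFGL Rhat lam rho ΘhatR ≤ objFGL Rhat lam rho Θ) :
    (1 / (8 * L ^ 2)) * ∑ k, frobSq (ΘhatR k - ΘR0 k)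
      + lam * ∑ k, l1Norm (offDiagPart (ΘhatR k - ΘR0 k))
      ≤ 8 * lam ^ 2 * (∑ k, (sparsity (ΘR0 k) : ℝ)) / (1 / (8 * L ^ 2)) :=
  oracle_inequality_FGL_multi_correlation_general p K hK L lam rho lam0 hL ΘR0 Rhat ΘhatR hΘR0 heig
    hRdiag hR0diag hlam0 hclose hrho hlam_low hlam_high hsparse hΘhatR hmin
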